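/- Let n_1, n_2 be nonnegative integers, n = n_1 + n_2, λ1 a special symplectic partition of 2n_1 and λ2 a special orthogonal partition of 2n_2. Then d(λ1) ∪ d(λ2) ≤ d(ind(λ1,λ2)) in the dominance order on partitions of 2n+1. (Here ind(λ1,λ2) is a symplectic partition of 2n, d(λ1) is an orthogonal partition of 2n_1+1, d(λ2) an orthogonal partition of 2n_2, and d(ind(λ1,λ2)) an orthogonal partition of 2n+1.) -/

import Mathlib

open Classical

namespace Wald

/-- `S f k = λ_1 + … + λ_k` (partitions are indexed from 1; index 0 is unused). -/
def S (f : ℕ → ℕ) (k : ℕ) : ℕ := ∑ j ∈ Finset.Icc 1 k, f j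

/-- `f` represents a partition of `N`: nonincreasing on indices `≥ 1`,
finitely many nonzero terms, with total sum `N`. -/
structure IsPartition (f : ℕ → ℕ) (N : ℕ) : Prop where
  mono : ∀ ⦃j k : ℕ⦄, 1 ≤ j → j ≤ k → f k ≤ f j
  fin : ∃ m, ∀ j, m < j → f j = 0
  total : ∀ m, (∀ j, m < j → f j = 0) → S f m = N

/-- multiplicity of `i` as a term of the partition -/
noncomputable def mult (f : ℕ → ℕ) (i : ℕ) : ℕ := Set.ncard {j : ℕ | 1 ≤ j ∧ f j = i}

/-- dominance order: `Dom f g ↔ f ≤ g` -/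
def Dom (f g : ℕ → ℕ) : Prop := ∀ k, S f k ≤ S g k

/-- transposed partition: `(transpose f) j = #{i ≥ 1 : f i ≥ j}` for `j ≥ 1` -/
noncomputable def transpose (f : ℕ → ℕ) : ℕ → ℕ :=
  fun j => Set.ncard {i : ℕ | 1 ≤ i ∧ 1 ≤ j ∧ j ≤ f i}

/-- union of two partitions (all terms listed together in nonincreasing order);
it is characterized by `transpose (unionP f g) = transpose f + transpose g`. -/
noncomputable def unionP (f g : ℕ → ℕ) : ℕ → ℕ :=
  transpose (fun j => transpose f j + transpose g j)

/-- the partition `(1)` -/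
def one1 : ℕ → ℕ := fun j => if j = 1 then 1 else 0

/-- symplectic partition: every odd `i ≥ 1` has even multiplicity -/
def Symp (f : ℕ → ℕ) : Prop := ∀ i, Odd i → Even (mult f i)

/-- orthogonal partition: every even `i ≥ 2` has even multiplicity -/
def Orth (f : ℕ → ℕ) : Prop := ∀ i, Even i → 1 ≤ i → Even (mult f i)

/-- `λ_{2j-1} ≡ λ_{2j} (mod 2)` for all `j ≥ 1` (speciality for symplectic
partitions of `2n` and orthogonal partitions of `2n`). -/
def SpecialPairs (f : ℕ → ℕ) : Prop := ∀ j, 1 ≤ j → f (2*j - 1) % 2 = f (2*j) % 2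

/-- speciality for orthogonal partitions of `2n+1`: `λ_1` odd and
`λ_{2j} ≡ λ_{2j+1} (mod 2)` for all `j ≥ 1`. -/
def SpecialOrthOdd (f : ℕ → ℕ) : Prop :=
  Odd (f 1) ∧ ∀ j, 1 ≤ j → f (2*j) % 2 = f (2*j + 1) % 2

/-- `Jord_bp` for symplectic partitions: even `i ≥ 2` with positive multiplicity -/
def JordbpS (f : ℕ → ℕ) : Set ℕ := {i | Even i ∧ 2 ≤ i ∧ 1 ≤ mult f i}

/-- `Jord_bp` for orthogonal partitions: odd `i ≥ 1` with positive multiplicity -/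
def JordbpO (f : ℕ → ℕ) : Set ℕ := {i | Odd i ∧ 1 ≤ mult f i}

/-- the set `{i_1 > … > i_m}` of terms with odd multiplicity -/
def OddSet (f : ℕ → ℕ) : Set ℕ := {i | Odd (mult f i)}

/-- for special symplectic partitions: `{i_1 > … > i_{m'}}`, with `0` added if `m` is odd -/
def Dsymp (f : ℕ → ℕ) : Set ℕ :=
  {i | Odd (mult f i) ∨ (i = 0 ∧ Odd (OddSet f).ncard)}

/-- `a = i_{2h-1}` and `b = i_{2h}` for some `h`: consecutive elements of `Dsymp f`
with an even number of elements of `Dsymp f` above `a`. -/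
def PairedS (f : ℕ → ℕ) (a b : ℕ) : Prop :=
  b < a ∧ a ∈ Dsymp f ∧ b ∈ Dsymp f ∧ Even ((Dsymp f ∩ Set.Ioi a).ncard) ∧
    Dsymp f ∩ Set.Ioo b a = ∅

/-- intervals of a special symplectic partition of `2n` -/
def IsIntervalS (f : ℕ → ℕ) (Δ : Set ℕ) : Prop :=
  (∃ a b, PairedS f a b ∧ Δ = {i | (i = 0 ∨ 1 ≤ mult f i) ∧ b ≤ i ∧ i ≤ a}) ∨
  (∃ i, Even i ∧ (i = 0 ∨ (2 ≤ i ∧ 1 ≤ mult f i)) ∧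
    (¬ ∃ a b, PairedS f a b ∧ b ≤ i ∧ i ≤ a) ∧ Δ = {i})

/-- `a = i_{2h-1}` and `b = i_{2h}` for some `h` (orthogonal partitions of `2n`) -/
def PairedOE (f : ℕ → ℕ) (a b : ℕ) : Prop :=
  b < a ∧ a ∈ OddSet f ∧ b ∈ OddSet f ∧ Even ((OddSet f ∩ Set.Ioi a).ncard) ∧
    OddSet f ∩ Set.Ioo b a = ∅

/-- intervals of a special orthogonal partition of `2n` -/
def IsIntervalOE (f : ℕ → ℕ) (Δ : Set ℕ) : Prop :=
  (∃ a b, PairedOE f a b ∧ Δ = {i | 1 ≤ mult f i ∧ b ≤ i ∧ i ≤ a}) ∨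
  (∃ i, Odd i ∧ 1 ≤ mult f i ∧ (¬ ∃ a b, PairedOE f a b ∧ b ≤ i ∧ i ≤ a) ∧ Δ = {i})

/-- `a = i_{2h}` and `b = i_{2h+1}` for some `h ≥ 1` (orthogonal partitions of `2n+1`) -/
def PairedOO (f : ℕ → ℕ) (a b : ℕ) : Prop :=
  b < a ∧ a ∈ OddSet f ∧ b ∈ OddSet f ∧ Odd ((OddSet f ∩ Set.Ioi a).ncard) ∧
    OddSet f ∩ Set.Ioo b a = ∅

/-- intervals of a special orthogonal partition of `2n+1` (convention `i_0 = ∞`) -/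
def IsIntervalOO (f : ℕ → ℕ) (Δ : Set ℕ) : Prop :=
  (∃ b, b ∈ OddSet f ∧ OddSet f ∩ Set.Ioi b = ∅ ∧ Δ = {i | 1 ≤ mult f i ∧ b ≤ i}) ∨
  (∃ a b, PairedOO f a b ∧ Δ = {i | 1 ≤ mult f i ∧ b ≤ i ∧ i ≤ a}) ∨
  (∃ i, Odd i ∧ 1 ≤ mult f i ∧
    (¬ ((∃ b, b ∈ OddSet f ∧ OddSet f ∩ Set.Ioi b = ∅ ∧ b ≤ i) ∨
        (∃ a b, PairedOO f a b ∧ b ≤ i ∧ i ≤ a))) ∧ Δ = {i})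

/-- `J(Δ) = {j ≥ 1 : λ_j ∈ Δ}` -/
def Jset (f : ℕ → ℕ) (Δ : Set ℕ) : Set ℕ := {j | 1 ≤ j ∧ f j ∈ Δ}

/-- `ζ(λ)` for a special symplectic partition (`j_max(Δ_min) = ∞`, so the smallest
interval contributes no `-1`: its `J`-set has no greatest element). -/
noncomputable def zetaS (f : ℕ → ℕ) : ℕ → ℤ := fun j =>
  if ∃ Δ, IsIntervalS f Δ ∧ IsLeast (Jset f Δ) j then 1
  else if ∃ Δ, IsIntervalS f Δ ∧ IsGreatest (Jset f Δ) j then -1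
  else 0

/-- `ζ(λ)` for a special orthogonal partition of `2n` -/
noncomputable def zetaOE (f : ℕ → ℕ) : ℕ → ℤ := fun j =>
  if ∃ Δ, IsIntervalOE f Δ ∧ IsLeast (Jset f Δ) j then 1
  else if ∃ Δ, IsIntervalOE f Δ ∧ IsGreatest (Jset f Δ) j then -1
  else 0

/-- `J^+` for `λ1` special symplectic and `λ2` special orthogonal (of `2n2`) -/
def JplusSet (f1 f2 : ℕ → ℕ) : Set ℕ :=
  {j | 1 ≤ j ∧ Even (f1 j) ∧ Odd (f2 j) ∧
    ((∃ Δ, IsIntervalS f1 Δ ∧ IsLeast (Jset f1 Δ) j) ∨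
     (∃ Δ, IsIntervalOE f2 Δ ∧ IsLeast (Jset f2 Δ) j))}

/-- `J^-` -/
def JminusSet (f1 f2 : ℕ → ℕ) : Set ℕ :=
  {j | 1 ≤ j ∧ Even (f1 j) ∧ Odd (f2 j) ∧
    ((∃ Δ, IsIntervalS f1 Δ ∧ IsGreatest (Jset f1 Δ) j) ∨
     (∃ Δ, IsIntervalOE f2 Δ ∧ IsGreatest (Jset f2 Δ) j))}

/-- the sequence `ξ` -/
noncomputable def xi (f1 f2 : ℕ → ℕ) : ℕ → ℤ := fun j =>
  if j ∈ JplusSet f1 f2 then 1 else if j ∈ JminusSet f1 f2 then -1 else 0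

/-- partial sums of an integer-valued sequence indexed from 1 -/
def Sz (f : ℕ → ℤ) (k : ℕ) : ℤ := ∑ j ∈ Finset.Icc 1 k, f j

/-- `g` is the greatest orthogonal partition of `N` which is dominated by the
sequence `t` (used to define the Spaltenstein-type duality `d`). -/
def IsDualOf (g : ℕ → ℕ) (N : ℕ) (t : ℕ → ℕ) : Prop :=
  (IsPartition g N ∧ Orth g ∧ Dom g t) ∧
  ∀ ν, IsPartition ν N → Orth ν → Dom ν t → Dom ν g

/-- `g = d(f)` for `f` a symplectic partition of `2m`: the greatest orthogonal
partition of `2m+1` dominated by `^t(f ∪ (1))`. -/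
def IsSympDual (g : ℕ → ℕ) (m : ℕ) (f : ℕ → ℕ) : Prop :=
  IsDualOf g (2*m+1) (transpose (unionP f one1))

/-- `g = d(f)` for `f` an orthogonal partition of `2m`: the greatest orthogonal
partition of `2m` dominated by `^tf`. -/
def IsOrthDual (g : ℕ → ℕ) (m : ℕ) (f : ℕ → ℕ) : Prop :=
  IsDualOf g (2*m) (transpose f)


/-! Write `ν = d(λ1) ∪ d(λ2) = ^t(^t d(λ1) + ^t d(λ2))` and `g = ind(λ1, λ2)`. As `ν` is
orthogonal and `d(g)` is the largest orthogonal partition below `^t(g ∪ (1)) = ^t g + (1)`, and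
transposition reverses dominance, it suffices to show `S_p(g) ≤ S_p(^t d(λ1)) + S_p(^t d(λ2))`
for all `p`. Dualising the definitions of `d` gives `λ1 ≤ λ1 ∪ (1) ≤ ^t d(λ1)` and
`λ2 ≤ ^t d(λ2)`, while `S_p(g) = S_p(λ1) + S_p(λ2) + S_p(ξ)`.

The `+1`s of `ξ` sit at the first indices of the sets `J(Δ)`, which are odd, and the `-1`s at
their last indices, which are even; the two alternate, so `S_p(ξ)` is `0` or `1`. When it is
`1`, `λ1_p` is even and, for `p` even, `λ1_p = λ1_{p+1}`. Then `S_p(λ1)` is even, whereas the odd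
partial sums of `^t d(λ1)` are odd because `d(λ1)` is an orthogonal partition of an odd number;
parity, and for even `p` the concavity of `p ↦ S_p(^t d(λ1))`, give the missing `+1`.
-/

def Nonincreasing (f : ℕ → ℕ) : Prop := ∀ ⦃j k : ℕ⦄, 1 ≤ j → j ≤ k → f k ≤ f j

def ZeroAfter (f : ℕ → ℕ) (M : ℕ) : Prop := ∀ j, M < j → f j = 0

lemma ZeroAfter.mono {f : ℕ → ℕ} {M M' : ℕ} (hB : ZeroAfter f M) (h : M ≤ M') :
    ZeroAfter f M' :=
  fun j hj => hB j (by omega)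

lemma IsPartition.zeroAfter_total {f : ℕ → ℕ} {N : ℕ} (hf : IsPartition f N) :
    ∃ M, ZeroAfter f M ∧ S f M = N := by
  obtain ⟨M, hM⟩ := hf.fin
  exact ⟨M, hM, hf.total M hM⟩

section PartialSums

variable {f : ℕ → ℕ} {M : ℕ}

lemma S_zero (f : ℕ → ℕ) : S f 0 = 0 := rfl

lemma S_succ (f : ℕ → ℕ) (k : ℕ) : S f (k + 1) = S f k + f (k + 1) := by
  rw [S, S, Finset.sum_Icc_succ_top (by omega)]

lemma S_add (f g : ℕ → ℕ) (k : ℕ) : S (fun j => f j + g j) k = S f k + S g k :=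
  Finset.sum_add_distrib

lemma S_congr {g : ℕ → ℕ} (h : ∀ j, 1 ≤ j → f j = g j) (k : ℕ) : S f k = S g k :=
  Finset.sum_congr rfl fun j hj => h j (Finset.mem_Icc.mp hj).1

lemma S_add_sum_Icc {m k : ℕ} (h : m ≤ k) :
    S f m + ∑ j ∈ Finset.Icc (m + 1) k, f j = S f k := by
  unfold S
  rw [← Finset.sum_union]
  · congr 1
    ext x
    simp only [Finset.mem_union, Finset.mem_Icc]
    omega
  · rw [Finset.disjoint_left]
    intro x hx hx'
    simp only [Finset.mem_Icc] at hx hx'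
    omega

lemma S_eq_of_zeroAfter (hB : ZeroAfter f M) {m : ℕ} (h : M ≤ m) : S f m = S f M := by
  rw [← S_add_sum_Icc h, Finset.sum_eq_zero fun j hj => hB j (Finset.mem_Icc.mp hj).1]
  rfl

lemma IsPartition.of_zeroAfter {N : ℕ} (hm : Nonincreasing f) (hB : ZeroAfter f M)
    (hS : S f M = N) : IsPartition f N where
  mono := hm
  fin := ⟨M, hB⟩
  total m hm' := by
    rw [← S_eq_of_zeroAfter hm' (le_max_left m M), S_eq_of_zeroAfter hB (le_max_right m M), hS]

end PartialSums

section Transpose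

variable {f : ℕ → ℕ} {M : ℕ}

lemma transpose_eq_card (hB : ZeroAfter f M) {j : ℕ} (hj : 1 ≤ j) :
    transpose f j = ((Finset.Icc 1 M).filter (fun i => j ≤ f i)).card := by
  rw [transpose, ← Set.ncard_coe_finset]
  congr 1
  ext i
  simp only [Finset.coe_filter, Finset.mem_Icc, Set.mem_ofPred_eq]
  constructor
  · rintro ⟨h1, _, h3⟩
    refine ⟨⟨h1, ?_⟩, h3⟩
    by_contra h
    have := hB i (by omega)
    omega
  · rintro ⟨⟨h1, _⟩, h3⟩
    exact ⟨h1, hj, h3⟩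

lemma transpose_le (hB : ZeroAfter f M) {j : ℕ} (hj : 1 ≤ j) : transpose f j ≤ M := by
  rw [transpose_eq_card hB hj]
  exact (Finset.card_filter_le _ _).trans (by simp)

lemma le_transpose_iff (hm : Nonincreasing f) (hB : ZeroAfter f M) {i m : ℕ} (hi : 1 ≤ i)
    (hmm : 1 ≤ m) : m ≤ transpose f i ↔ i ≤ f m := by
  rw [transpose_eq_card hB hi]
  constructor
  · intro h
    by_contra hc
    have hsub : (Finset.Icc 1 M).filter (fun i' => i ≤ f i') ⊆ Finset.Icc 1 (m - 1) := by
      intro x hx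
      simp only [Finset.mem_filter, Finset.mem_Icc] at hx ⊢
      refine ⟨hx.1.1, ?_⟩
      by_contra hxm
      have := hm hmm (show m ≤ x by omega)
      omega
    have := Finset.card_le_card hsub
    rw [Nat.card_Icc] at this
    omega
  · intro h
    have hM : m ≤ M := by
      by_contra hc
      have := hB m (by omega)
      omega
    have hsub : Finset.Icc 1 m ⊆ (Finset.Icc 1 M).filter (fun i' => i ≤ f i') := by
      intro x hx
      simp only [Finset.mem_Icc] at hx
      simp only [Finset.mem_filter, Finset.mem_Icc]
      exact ⟨⟨hx.1, hx.2.trans hM⟩, h.trans (hm hx.1 hx.2)⟩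
    have := Finset.card_le_card hsub
    rw [Nat.card_Icc] at this
    omega

lemma transpose_nonincreasing (hB : ZeroAfter f M) : Nonincreasing (transpose f) := by
  intro j k hj hjk
  rw [transpose_eq_card hB hj, transpose_eq_card hB (hj.trans hjk)]
  exact Finset.card_le_card (Finset.monotone_filter_right _ fun i _ h => hjk.trans h)

lemma transpose_zeroAfter (hm : Nonincreasing f) (hB : ZeroAfter f M) :
    ZeroAfter (transpose f) (f 1) := by
  intro j hj
  rw [transpose_eq_card hB (by omega), Finset.card_eq_zero, Finset.filter_eq_empty_iff]
  intro x hx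
  have := hm le_rfl (Finset.mem_Icc.mp hx).1
  omega

lemma transpose_eq_of (hm : Nonincreasing f) (hB : ZeroAfter f M) {v p : ℕ} (hv : 1 ≤ v)
    (h1 : 1 ≤ p → v ≤ f p) (h2 : f (p + 1) < v) : transpose f v = p := by
  have hub : transpose f v ≤ p := by
    by_contra hc
    have := (le_transpose_iff hm hB hv (by omega : 1 ≤ p + 1)).mp (by omega)
    omega
  rcases Nat.eq_zero_or_pos p with rfl | hp
  · omega
  have := (le_transpose_iff hm hB hv hp).mpr (h1 hp)
  omega

lemma transpose_transpose (hm : Nonincreasing f) (hB : ZeroAfter f M) {j : ℕ} (hj : 1 ≤ j) :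
    transpose (transpose f) j = f j := by
  have : {i : ℕ | 1 ≤ i ∧ 1 ≤ j ∧ j ≤ transpose f i} = Set.Icc 1 (f j) := by
    ext i
    simp only [Set.mem_ofPred_eq, Set.mem_Icc]
    constructor
    · rintro ⟨h1, _, h3⟩
      exact ⟨h1, (le_transpose_iff hm hB h1 hj).mp h3⟩
    · rintro ⟨h1, h2⟩
      exact ⟨h1, hj, (le_transpose_iff hm hB h1 hj).mpr h2⟩
  rw [transpose, this, ← Finset.coe_Icc, Set.ncard_coe_finset, Nat.card_Icc]
  omega

lemma S_transpose_transpose (hm : Nonincreasing f) (hB : ZeroAfter f M) (k : ℕ) :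
    S (transpose (transpose f)) k = S f k :=
  S_congr (fun _ hj => transpose_transpose hm hB hj) k

/-- Double counting of the cells of the Young diagram in the first `k` columns. -/
lemma S_transpose (hB : ZeroAfter f M) (k : ℕ) :
    S (transpose f) k = ∑ i ∈ Finset.Icc 1 M, min (f i) k := by
  have h1 : ∀ j ∈ Finset.Icc 1 k, transpose f j
      = ∑ i ∈ Finset.Icc 1 M, (if j ≤ f i then 1 else 0) := by
    intro j hj
    rw [transpose_eq_card hB (Finset.mem_Icc.mp hj).1, Finset.card_filter]
  rw [S, Finset.sum_congr rfl h1, Finset.sum_comm]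
  refine Finset.sum_congr rfl fun i _ => ?_
  have : (Finset.Icc 1 k).filter (fun j => j ≤ f i) = Finset.Icc 1 (min (f i) k) := by
    ext x
    simp only [Finset.mem_filter, Finset.mem_Icc]
    omega
  rw [← Finset.sum_filter, this]
  simp

lemma S_transpose_of_le (hB : ZeroAfter f M) {k : ℕ}
    (hk : ∀ i, 1 ≤ i → i ≤ M → f i ≤ k) : S (transpose f) k = S f M := by
  rw [S_transpose hB]
  exact Finset.sum_congr rfl fun i hi =>
    min_eq_left (hk i (Finset.mem_Icc.mp hi).1 (Finset.mem_Icc.mp hi).2)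

lemma isPartition_transpose (hm : Nonincreasing f) (hB : ZeroAfter f M) :
    IsPartition (transpose f) (S f M) := by
  refine ⟨transpose_nonincreasing hB, ⟨f 1, transpose_zeroAfter hm hB⟩, fun m hmz => ?_⟩
  refine S_transpose_of_le hB fun i hi1 _ => ?_
  by_contra hc
  have := (le_transpose_iff hm hB (by omega) hi1).mpr (by omega : m + 1 ≤ f i)
  have := hmz (m + 1) (by omega)
  omega

lemma S_transpose_add_le (hB : ZeroAfter f M) (k : ℕ) {m : ℕ} (hm : m ≤ M) :
    S (transpose f) k + S f m ≤ m * k + S f M := by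
  have hsplit := S_add_sum_Icc (f := fun i => min (f i) k) hm
  rw [S_transpose hB, ← S_add_sum_Icc hm]
  rw [S, S] at hsplit
  rw [← hsplit]
  have h1 : ∑ i ∈ Finset.Icc 1 m, min (f i) k ≤ m * k :=
    (Finset.sum_le_sum fun i _ => min_le_right _ _).trans (by simp)
  have h2 : ∑ i ∈ Finset.Icc (m + 1) M, min (f i) k ≤ ∑ i ∈ Finset.Icc (m + 1) M, f i :=
    Finset.sum_le_sum fun i _ => min_le_left _ _
  omega

lemma S_transpose_add_eq (hm : Nonincreasing f) (hB : ZeroAfter f M) {k : ℕ} (hk : 1 ≤ k) :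
    S (transpose f) k + S f (transpose f k) = transpose f k * k + S f M := by
  set p := transpose f k
  have hpM : p ≤ M := transpose_le hB hk
  have hsplit := S_add_sum_Icc (f := fun i => min (f i) k) hpM
  rw [S_transpose hB, ← S_add_sum_Icc hpM]
  rw [S, S] at hsplit
  rw [← hsplit]
  have h1 : ∑ i ∈ Finset.Icc 1 p, min (f i) k = p * k := by
    rw [Finset.sum_congr rfl fun i hi => min_eq_right
      ((le_transpose_iff hm hB hk (Finset.mem_Icc.mp hi).1).mp (Finset.mem_Icc.mp hi).2)]
    simp [p]
  have h2 : ∑ i ∈ Finset.Icc (p + 1) M, min (f i) k = ∑ i ∈ Finset.Icc (p + 1) M, f i := by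
    refine Finset.sum_congr rfl fun i hi => min_eq_left ?_
    have hi := (Finset.mem_Icc.mp hi).1
    by_contra hc
    have := (le_transpose_iff hm hB hk (by omega : 1 ≤ i)).mpr (by omega : k ≤ f i)
    omega
  omega

/-- Transposition reverses dominance, up to the difference of the totals. -/
lemma S_transpose_add_le_of_S_le {g : ℕ → ℕ} (hm : Nonincreasing f) (hB : ZeroAfter f M)
    (hBg : ZeroAfter g M) (hle : ∀ p, S f p ≤ S g p) (k : ℕ) :
    S (transpose g) k + S f M ≤ S (transpose f) k + S g M := by
  rcases Nat.eq_zero_or_pos k with rfl | hk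
  · simpa [S_zero] using hle M
  have hp := transpose_le hB hk
  have := S_transpose_add_le hBg k hp
  have := S_transpose_add_eq hm hB hk
  have := hle (transpose f k)
  omega

lemma dom_transpose_of_dom_transpose {d : ℕ → ℕ} {N : ℕ} (hd : IsPartition d N)
    (hf : IsPartition f N) (hdom : Dom d (transpose f)) : Dom f (transpose d) := by
  obtain ⟨Md, hBd, hNd⟩ := hd.zeroAfter_total
  obtain ⟨Mf, hBf, hNf⟩ := hf.zeroAfter_total
  set M := Md + f 1
  have hBt : ZeroAfter (transpose f) M := (transpose_zeroAfter hf.mono hBf).mono (by omega)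
  have hNt : S (transpose f) M = N := by
    rw [S_transpose_of_le hBf fun i hi _ => (hf.mono le_rfl hi).trans (by omega), hNf]
  intro k
  have := S_transpose_add_le_of_S_le hd.mono (hBd.mono (by omega)) hBt hdom k
  rw [S_transpose_transpose hf.mono hBf, S_eq_of_zeroAfter hBd (by omega), hNd, hNt] at this
  omega

end Transpose

section Multiplicity

variable {f : ℕ → ℕ} {M : ℕ}

lemma mult_eq_card (hB : ZeroAfter f M) {v : ℕ} (hv : 1 ≤ v) :
    mult f v = ((Finset.Icc 1 M).filter (fun j => f j = v)).card := by
  rw [mult, ← Set.ncard_coe_finset]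
  congr 1
  ext j
  simp only [Finset.coe_filter, Finset.mem_Icc, Set.mem_ofPred_eq]
  constructor
  · rintro ⟨h1, h2⟩
    refine ⟨⟨h1, ?_⟩, h2⟩
    by_contra h
    have := hB j (by omega)
    omega
  · rintro ⟨⟨h1, _⟩, h2⟩
    exact ⟨h1, h2⟩

/-- The value `0` is taken infinitely often, so its `Set.ncard` is the junk value `0`. -/
lemma mult_zero (hB : ZeroAfter f M) : mult f 0 = 0 := by
  refine Set.Infinite.ncard (Set.infinite_of_not_bddAbove fun ⟨B, hBd⟩ => ?_)
  have := hBd (show M + B + 1 ∈ {j : ℕ | 1 ≤ j ∧ f j = 0} from ⟨by omega, hB _ (by omega)⟩)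
  omega

lemma one_le_mult (hB : ZeroAfter f M) {j : ℕ} (hj : 1 ≤ j) (hv : 1 ≤ f j) :
    1 ≤ mult f (f j) := by
  rw [mult_eq_card hB hv, Nat.one_le_iff_ne_zero, ← Nat.pos_iff_ne_zero, Finset.card_pos]
  refine ⟨j, Finset.mem_filter.mpr ⟨Finset.mem_Icc.mpr ⟨hj, ?_⟩, rfl⟩⟩
  by_contra h
  have := hB j (by omega)
  omega

lemma transpose_eq_add_mult (hB : ZeroAfter f M) {v : ℕ} (hv : 1 ≤ v) :
    transpose f v = transpose f (v + 1) + mult f v := by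
  rw [transpose_eq_card hB hv, transpose_eq_card hB (by omega), mult_eq_card hB hv,
    ← Finset.card_union_of_disjoint]
  · congr 1
    ext x
    simp only [Finset.mem_union, Finset.mem_filter, Finset.mem_Icc]
    omega
  · rw [Finset.disjoint_left]
    intro x hx hx'
    simp only [Finset.mem_filter] at hx hx'
    omega

lemma mult_eq_zero_of_lt (hm : Nonincreasing f) (hB : ZeroAfter f M) {v : ℕ} (hv : f 1 < v) :
    mult f v = 0 := by
  have := transpose_eq_add_mult hB (v := v) (by omega)
  rw [transpose_zeroAfter hm hB v hv] at this
  omega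

lemma transpose_eq_sum_mult (hm : Nonincreasing f) (hB : ZeroAfter f M) {v T : ℕ} (hv : 1 ≤ v)
    (hT : f 1 ≤ T) : transpose f v = ∑ i ∈ Finset.Icc v T, mult f i := by
  induction hn : T + 1 - v generalizing v with
  | zero =>
    rw [Finset.Icc_eq_empty (by omega), Finset.sum_empty]
    exact transpose_zeroAfter hm hB v (by omega)
  | succ n ih =>
    rw [transpose_eq_add_mult hB hv, ih (by omega) (by omega), Finset.Icc_add_one_left_eq_Ioc,
      add_comm, Finset.add_sum_Ioc_eq_sum_Icc (by omega)]

lemma even_transpose_succ_iff (hm : Nonincreasing f) (hB : ZeroAfter f M) (u : ℕ) :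
    Even (transpose f (u + 1)) ↔ Even (OddSet f ∩ Set.Ioi u).ncard := by
  rw [transpose_eq_sum_mult hm hB (by omega) (le_max_left (f 1) u),
    Finset.even_sum_iff_even_card_odd]
  congr! 2
  rw [← Set.ncard_coe_finset]
  congr 1
  ext i
  simp only [Finset.coe_filter, Finset.mem_Icc, OddSet, Set.mem_inter_iff, Set.mem_ofPred_eq,
    Set.mem_Ioi]
  constructor
  · rintro ⟨_, h⟩
    exact ⟨h, by omega⟩
  · rintro ⟨h, hi⟩
    refine ⟨⟨by omega, ?_⟩, h⟩
    by_contra hc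
    rw [mult_eq_zero_of_lt hm hB (by omega)] at h
    exact Nat.not_odd_zero h

lemma even_transpose_iff_of_even_mult (hB : ZeroAfter f M) {u v : ℕ} (hu : 1 ≤ u) (huv : u ≤ v)
    (h : ∀ i, u ≤ i → i < v → Even (mult f i)) :
    Even (transpose f u) ↔ Even (transpose f v) := by
  induction v, huv using Nat.le_induction with
  | base => rfl
  | succ v huv ih =>
    rw [ih fun i hi hiv => h i hi (by omega), transpose_eq_add_mult hB (by omega),
      Nat.even_add, iff_true_right (h v huv (by omega))]

end Multiplicity

section Parity

variable {f : ℕ → ℕ} {M : ℕ}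

lemma pos_of_mem_oddSet (hB : ZeroAfter f M) {i : ℕ} (hi : i ∈ OddSet f) : 1 ≤ i := by
  refine Nat.one_le_iff_ne_zero.mpr fun h => ?_
  rw [OddSet, Set.mem_ofPred_eq, h, mult_zero hB] at hi
  exact Nat.not_odd_zero hi

lemma oddSet_subset_Icc (hm : Nonincreasing f) (hB : ZeroAfter f M) :
    OddSet f ⊆ Set.Icc 1 (f 1) := by
  intro i hi
  refine ⟨pos_of_mem_oddSet hB hi, not_lt.mp fun h => ?_⟩
  rw [OddSet, Set.mem_ofPred_eq, mult_eq_zero_of_lt hm hB h] at hi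
  exact Nat.not_odd_zero hi

lemma oddSet_finite (hm : Nonincreasing f) (hB : ZeroAfter f M) : (OddSet f).Finite :=
  (Set.finite_Icc 1 (f 1)).subset (oddSet_subset_Icc hm hB)

lemma dsymp_subset : Dsymp f ⊆ insert 0 (OddSet f) := by
  rintro i (h | ⟨rfl, _⟩)
  · exact Set.mem_insert_of_mem _ h
  · exact Set.mem_insert _ _

lemma even_ncard_dsymp (hm : Nonincreasing f) (hB : ZeroAfter f M) : Even (Dsymp f).ncard := by
  have h0 : (0 : ℕ) ∉ OddSet f := fun h => by
    have := pos_of_mem_oddSet hB h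
    omega
  rcases Nat.even_or_odd (OddSet f).ncard with he | ho
  · have : Dsymp f = OddSet f := by
      ext i
      simp only [Dsymp, OddSet, Set.mem_ofPred_eq]
      exact ⟨fun h => h.resolve_right fun h' => Nat.not_even_iff_odd.mpr h'.2 he, Or.inl⟩
    rwa [this]
  · have : Dsymp f = insert 0 (OddSet f) :=
      dsymp_subset.antisymm (Set.insert_subset (Or.inr ⟨rfl, ho⟩) fun _ h => Or.inl h)
    rw [this, Set.ncard_insert_of_notMem h0 (oddSet_finite hm hB)]
    exact ho.add_one

/-- Columns `i` and `i + 1` of an orthogonal partition have the same parity when `i` is even. -/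
lemma S_transpose_mod_two_of_orth (hm : Nonincreasing f) (hB : ZeroAfter f M) (ho : Orth f)
    {k : ℕ} (hk : Odd k) : S (transpose f) k % 2 = S f M % 2 := by
  have hstep : ∀ j, S (transpose f) (2 * j + 1) % 2 = S (transpose f) 1 % 2 := by
    intro j
    induction j with
    | zero => rfl
    | succ j ih =>
      have heven := Nat.even_iff.mp (ho (2 * j + 1 + 1) ⟨j + 1, by omega⟩ (by omega))
      rw [show 2 * (j + 1) + 1 = 2 * j + 1 + 1 + 1 by omega]
      generalize 2 * j + 1 = v at ih heven ⊢
      have hmult := transpose_eq_add_mult hB (v := v + 1) (by omega)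
      rw [S_succ, S_succ]
      omega
  obtain ⟨j, rfl⟩ := hk
  have htotal : S (transpose f) (2 * (M + f 1) + 1) = S f M :=
    S_transpose_of_le hB fun i hi _ => (hm le_rfl hi).trans (by omega)
  rw [hstep, ← htotal, hstep]

lemma even_ncard_oddSet_of_orth (hm : Nonincreasing f) (hB : ZeroAfter f M) (ho : Orth f)
    (he : Even (S f M)) : Even (OddSet f).ncard := by
  have hpos : OddSet f ∩ Set.Ioi 0 = OddSet f :=
    Set.inter_eq_left.mpr fun i hi => (oddSet_subset_Icc hm hB hi).1
  rw [← hpos, ← even_transpose_succ_iff hm hB, Nat.even_iff]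
  have h1 := S_transpose_mod_two_of_orth hm hB ho odd_one
  rw [show (1 : ℕ) = 0 + 1 from rfl, S_succ, S_zero] at h1
  have := Nat.even_iff.mp he
  omega

end Parity

namespace SpecialPairs

variable {f : ℕ → ℕ}

lemma mod_two_eq (hsp : SpecialPairs f) {p : ℕ} (hp : Odd p) : f p % 2 = f (p + 1) % 2 := by
  obtain ⟨j, rfl⟩ := hp
  have := hsp (j + 1) (by omega)
  rwa [show 2 * (j + 1) - 1 = 2 * j + 1 by omega, show 2 * (j + 1) = 2 * j + 1 + 1 by omega]
    at this

lemma even_S (hsp : SpecialPairs f) (j : ℕ) : Even (S f (2 * j)) := by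
  induction j with
  | zero => exact ⟨0, rfl⟩
  | succ j ih =>
    have := hsp.mod_two_eq (p := 2 * j + 1) ⟨j, rfl⟩
    rw [show 2 * (j + 1) = 2 * j + 1 + 1 by omega, S_succ, S_succ, Nat.even_iff]
    rw [Nat.even_iff] at ih
    omega

end SpecialPairs

section Union

variable {f g : ℕ → ℕ} {N N' : ℕ}

lemma zeroAfter_one1 : ZeroAfter one1 1 := fun _ hj => if_neg (by omega)

lemma isPartition_one1 : IsPartition one1 1 where
  mono j k hj hjk := by unfold one1; split_ifs <;> omega
  fin := ⟨1, zeroAfter_one1⟩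
  total m hm := by
    have hm1 : 1 ≤ m := by
      by_contra h
      simpa [one1] using hm 1 (by omega)
    rw [S_eq_of_zeroAfter zeroAfter_one1 hm1]
    rfl

lemma transpose_le_transpose {M : ℕ} (hB : ZeroAfter g M) (h : ∀ i, 1 ≤ i → f i ≤ g i)
    (j : ℕ) : transpose f j ≤ transpose g j := by
  refine Set.ncard_le_ncard (fun i ⟨hi, hj, hji⟩ => ⟨hi, hj, hji.trans (h i hi)⟩) ?_
  refine (Set.finite_Icc 1 M).subset fun i ⟨hi, hj, hji⟩ => ⟨hi, not_lt.mp fun hiM => ?_⟩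
  have := hB i hiM
  omega

lemma nonincreasing_zeroAfter_transpose_add (hf : IsPartition f N) (hg : IsPartition g N') :
    Nonincreasing (fun i => transpose f i + transpose g i) ∧
      ZeroAfter (fun i => transpose f i + transpose g i) (f 1 + g 1) := by
  obtain ⟨Mf, hBf, -⟩ := hf.zeroAfter_total
  obtain ⟨Mg, hBg, -⟩ := hg.zeroAfter_total
  refine ⟨fun j k hj hjk => Nat.add_le_add (transpose_nonincreasing hBf hj hjk)
    (transpose_nonincreasing hBg hj hjk), fun i hi => ?_⟩
  simp only [transpose_zeroAfter hf.mono hBf i (by omega),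
    transpose_zeroAfter hg.mono hBg i (by omega)]

lemma transpose_unionP (hf : IsPartition f N) (hg : IsPartition g N') {j : ℕ} (hj : 1 ≤ j) :
    transpose (unionP f g) j = transpose f j + transpose g j :=
  have h := nonincreasing_zeroAfter_transpose_add hf hg
  transpose_transpose h.1 h.2 hj

lemma isPartition_unionP (hf : IsPartition f N) (hg : IsPartition g N') :
    IsPartition (unionP f g) (N + N') := by
  obtain ⟨Mf, hBf, hNf⟩ := hf.zeroAfter_total
  obtain ⟨Mg, hBg, hNg⟩ := hg.zeroAfter_total
  have h := nonincreasing_zeroAfter_transpose_add hf hg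
  have htotal : S (fun i => transpose f i + transpose g i) (f 1 + g 1) = N + N' := by
    rw [S_add, S_transpose_of_le hBf fun i hi _ => (hf.mono le_rfl hi).trans (by omega),
      S_transpose_of_le hBg fun i hi _ => (hg.mono le_rfl hi).trans (by omega), hNf, hNg]
  exact htotal ▸ isPartition_transpose h.1 h.2

lemma mult_unionP (hf : IsPartition f N) (hg : IsPartition g N') {i : ℕ} (hi : 1 ≤ i) :
    mult (unionP f g) i = mult f i + mult g i := by
  obtain ⟨Mf, hBf, -⟩ := hf.zeroAfter_total
  obtain ⟨Mg, hBg, -⟩ := hg.zeroAfter_total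
  obtain ⟨Mu, hBu, -⟩ := (isPartition_unionP hf hg).zeroAfter_total
  have hu := transpose_eq_add_mult hBu hi
  have h1 := transpose_eq_add_mult hBf hi
  have h2 := transpose_eq_add_mult hBg hi
  rw [transpose_unionP hf hg hi, transpose_unionP hf hg (by omega)] at hu
  omega

lemma Orth.unionP (ho : Orth f) (ho' : Orth g) (hf : IsPartition f N) (hg : IsPartition g N') :
    Orth (unionP f g) := fun i hie hi => by
  rw [mult_unionP hf hg hi]
  exact (ho i hie hi).add (ho' i hie hi)

lemma S_le_S_unionP (hf : IsPartition f N) (hg : IsPartition g N') (k : ℕ) :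
    S f k ≤ S (unionP f g) k := by
  obtain ⟨Mf, hBf, -⟩ := hf.zeroAfter_total
  have h := nonincreasing_zeroAfter_transpose_add hf hg
  rw [← S_transpose_transpose hf.mono hBf]
  exact Finset.sum_le_sum fun j _ =>
    transpose_le_transpose h.2 (fun i _ => Nat.le_add_right _ _) j

lemma S_transpose_unionP_one1 (hg : IsPartition g N) {k : ℕ} (hk : 1 ≤ k) :
    S (transpose (unionP g one1)) k = S (transpose g) k + 1 := by
  rw [S_congr (fun j hj => transpose_unionP hg isPartition_one1 hj), S_add,
    S_transpose_of_le zeroAfter_one1 fun i _ _ => by unfold one1; split_ifs <;> omega]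
  rfl

/-- Dominance reversal under transposition, since `d₁ ∪ d₂ = ^t(^t d₁ + ^t d₂)` and
`^t(g ∪ (1)) = ^t g + (1)`. -/
lemma dom_unionP_transpose_unionP_one1 {d1 d2 : ℕ → ℕ} {N1 N2 : ℕ} (hg : IsPartition g N)
    (hd1 : IsPartition d1 N1) (hd2 : IsPartition d2 N2) (hN : N1 + N2 = N + 1)
    (hle : ∀ p, S g p ≤ S (transpose d1) p + S (transpose d2) p) :
    Dom (unionP d1 d2) (transpose (unionP g one1)) := by
  obtain ⟨Mg, hBg, hNg⟩ := hg.zeroAfter_total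
  obtain ⟨M1, hB1, hN1⟩ := hd1.zeroAfter_total
  obtain ⟨M2, hB2, hN2⟩ := hd2.zeroAfter_total
  have hw := nonincreasing_zeroAfter_transpose_add hd1 hd2
  obtain ⟨M, hM⟩ : ∃ M, M = Mg + d1 1 + d2 1 := ⟨_, rfl⟩
  have hSw : S (fun i => transpose d1 i + transpose d2 i) M = N1 + N2 := by
    rw [S_add, S_transpose_of_le hB1 fun i hi _ => (hd1.mono le_rfl hi).trans (by omega),
      S_transpose_of_le hB2 fun i hi _ => (hd2.mono le_rfl hi).trans (by omega), hN1, hN2]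
  intro k
  rcases Nat.eq_zero_or_pos k with rfl | hk
  · exact le_rfl
  have := S_transpose_add_le_of_S_le (M := M) hg.mono (hBg.mono (by omega)) (hw.2.mono (by omega))
    (fun p => (hle p).trans_eq (S_add _ _ p).symm) k
  rw [S_eq_of_zeroAfter hBg (by omega), hNg, hSw] at this
  rw [S_transpose_unionP_one1 hg hk, unionP]
  omega

end Union

section Windows

/-- `a = i_{2h-1}` and `b = i_{2h}` for some `h`, where `D = {i_1 > i_2 > …}`. -/
def Paired (D : Set ℕ) (a b : ℕ) : Prop :=
  b < a ∧ a ∈ D ∧ b ∈ D ∧ Even ((D ∩ Set.Ioi a).ncard) ∧ D ∩ Set.Ioo b a = ∅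

/-- The value range `[b, a]` of an interval: a pair of `D`, or a single value covered by none. -/
def Window (D : Set ℕ) (a b : ℕ) : Prop :=
  Paired D a b ∨ (a = b ∧ ¬ ∃ a' b', Paired D a' b' ∧ b' ≤ a ∧ a ≤ a')

def partIndices (f : ℕ → ℕ) (a b : ℕ) : Set ℕ := {j | 1 ≤ j ∧ b ≤ f j ∧ f j ≤ a}

structure MarksOddMult (f : ℕ → ℕ) (D : Set ℕ) : Prop where
  finite : D.Finite
  even_ncard : Even D.ncard
  mem_iff : ∀ i, 1 ≤ i → (i ∈ D ↔ Odd (mult f i))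

lemma exists_paired_of_odd {D : Set ℕ} (hfin : D.Finite) (heven : Even D.ncard) {u : ℕ}
    (hu : Odd (D ∩ Set.Ioi u).ncard) : ∃ a b, Paired D a b ∧ b ≤ u ∧ u < a := by
  have hne : (D ∩ Set.Ioi u).Nonempty :=
    Set.nonempty_of_ncard_ne_zero fun h => by rw [h] at hu; exact Nat.not_odd_zero hu
  have hbelow : (D ∩ Set.Iic u).Nonempty := by
    by_contra h
    have hD : D ∩ Set.Ioi u = D := Set.inter_eq_left.mpr fun x hx =>
      Set.mem_Ioi.mpr (not_le.mp fun hxu => h ⟨x, hx, hxu⟩)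
    rw [hD] at hu
    exact Nat.not_even_iff_odd.mpr hu heven
  have hbdd : BddAbove (D ∩ Set.Iic u) := (hfin.inter_of_left _).bddAbove
  set a := sInf (D ∩ Set.Ioi u)
  set b := sSup (D ∩ Set.Iic u)
  have ha : a ∈ D ∩ Set.Ioi u := Nat.sInf_mem hne
  have hb : b ∈ D ∩ Set.Iic u := Nat.sSup_mem hbelow hbdd
  have hab : ∀ x ∈ D, b < x → x < a → False := fun x hx hbx hxa => by
    rcases le_or_gt x u with hxu | hxu
    · exact absurd (le_csSup hbdd ⟨hx, hxu⟩) (not_le.mpr hbx)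
    · exact absurd (Nat.sInf_le (show x ∈ D ∩ Set.Ioi u from ⟨hx, hxu⟩)) (not_le.mpr hxa)
  have hIoi : D ∩ Set.Ioi a = (D ∩ Set.Ioi u) \ {a} := by
    ext x
    simp only [Set.mem_inter_iff, Set.mem_Ioi, Set.mem_sdiff, Set.mem_singleton_iff]
    constructor
    · rintro ⟨hx, hxa⟩
      exact ⟨⟨hx, ha.2.trans hxa⟩, hxa.ne'⟩
    · rintro ⟨⟨hx, hxu⟩, hxa⟩
      exact ⟨hx, lt_of_le_of_ne (Nat.sInf_le (show x ∈ D ∩ Set.Ioi u from ⟨hx, hxu⟩)) (Ne.symm hxa)⟩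
  refine ⟨a, b, ⟨lt_of_le_of_lt hb.2 ha.2, ha.1, hb.1, ?_, ?_⟩, hb.2, ha.2⟩
  · rw [hIoi, Set.ncard_sdiff_singleton_of_mem ha]
    obtain ⟨k, hk⟩ := hu
    exact ⟨k, by omega⟩
  · exact Set.eq_empty_iff_forall_notMem.mpr fun x ⟨hx, hbx, hxa⟩ => hab x hx hbx hxa

variable {f : ℕ → ℕ} {M : ℕ} {D : Set ℕ} {a b : ℕ}

lemma marksOddMult_dsymp (hm : Nonincreasing f) (hB : ZeroAfter f M) :
    MarksOddMult f (Dsymp f) where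
  finite := ((oddSet_finite hm hB).insert 0).subset dsymp_subset
  even_ncard := even_ncard_dsymp hm hB
  mem_iff i hi := ⟨fun h => h.resolve_right fun h' => by omega, Or.inl⟩

lemma marksOddMult_oddSet (hm : Nonincreasing f) (hB : ZeroAfter f M)
    (heven : Even (OddSet f).ncard) : MarksOddMult f (OddSet f) where
  finite := oddSet_finite hm hB
  even_ncard := heven
  mem_iff _ _ := Iff.rfl

lemma MarksOddMult.even_transpose_succ_iff (hD : MarksOddMult f D) (hm : Nonincreasing f)
    (hB : ZeroAfter f M) (u : ℕ) :
    Even (transpose f (u + 1)) ↔ Even (D ∩ Set.Ioi u).ncard := by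
  have : D ∩ Set.Ioi u = OddSet f ∩ Set.Ioi u := by
    ext i
    simp only [Set.mem_inter_iff, Set.mem_Ioi]
    exact and_congr_left fun hi => hD.mem_iff i (by omega)
  rw [this, _root_.Wald.even_transpose_succ_iff hm hB]

lemma MarksOddMult.even_transpose_succ_of_not_covered (hD : MarksOddMult f D)
    (hm : Nonincreasing f) (hB : ZeroAfter f M) {u : ℕ}
    (h : ¬ ∃ a b, Paired D a b ∧ b ≤ u ∧ u < a) : Even (transpose f (u + 1)) :=
  (hD.even_transpose_succ_iff hm hB u).mpr
    (Nat.not_odd_iff_even.mp fun hodd => h (exists_paired_of_odd hD.finite hD.even_ncard hodd))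

lemma Paired.odd_transpose (hp : Paired D a b) (hD : MarksOddMult f D) (hm : Nonincreasing f)
    (hB : ZeroAfter f M) {w : ℕ} (hbw : b < w) (hwa : w ≤ a) :
    Odd (transpose f w) := by
  have hgap : ∀ i, w ≤ i → i < a → Even (mult f i) := fun i hwi hia =>
    Nat.not_odd_iff_even.mp fun hodd => Set.eq_empty_iff_forall_notMem.mp hp.2.2.2.2 i
      ⟨(hD.mem_iff i (by omega)).mpr hodd, by omega, hia⟩
  have hta := (hD.even_transpose_succ_iff hm hB a).mpr hp.2.2.2.1
  have hma := (hD.mem_iff a (by omega)).mp hp.2.1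
  rw [← Nat.not_even_iff_odd, even_transpose_iff_of_even_mult hB (by omega) hwa hgap,
    transpose_eq_add_mult hB (by omega), Nat.even_add]
  exact fun h => Nat.not_even_iff_odd.mpr hma (h.mp hta)

lemma Window.even_transpose_succ (hw : Window D a b) (hD : MarksOddMult f D)
    (hm : Nonincreasing f) (hB : ZeroAfter f M) : Even (transpose f (a + 1)) := by
  rcases hw with hp | ⟨rfl, hnc⟩
  · exact (hD.even_transpose_succ_iff hm hB a).mpr hp.2.2.2.1
  · exact hD.even_transpose_succ_of_not_covered hm hB fun ⟨a', b', hp, h1, h2⟩ =>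
      hnc ⟨a', b', hp, h1, h2.le⟩

lemma Window.even_transpose (hw : Window D a b) (hD : MarksOddMult f D) (hm : Nonincreasing f)
    (hB : ZeroAfter f M) (hb : 1 ≤ b) : Even (transpose f b) := by
  rcases hw with hp | ⟨rfl, hnc⟩
  · have hodd := hp.odd_transpose hD hm hB (lt_add_one b) (by have := hp.1; omega)
    rw [transpose_eq_add_mult hB hb, Nat.even_add]
    exact iff_of_false (Nat.not_even_iff_odd.mpr hodd)
      (Nat.not_even_iff_odd.mpr ((hD.mem_iff b hb).mp hp.2.2.1))
  · have := hD.even_transpose_succ_of_not_covered hm hB (u := a - 1)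
      fun ⟨a', b', hp, h1, h2⟩ => hnc ⟨a', b', hp, by omega, by omega⟩
    rwa [Nat.sub_add_cancel hb] at this

lemma eq_transpose_of_isLeast_partIndices (hm : Nonincreasing f) (hB : ZeroAfter f M) {j : ℕ}
    (h : IsLeast (partIndices f a b) j) : j = transpose f (a + 1) + 1 := by
  obtain ⟨⟨hj, hbj, hja⟩, hmin⟩ := h
  have : transpose f (a + 1) = j - 1 := by
    refine transpose_eq_of hm hB (by omega) (fun hj1 => ?_) (by rw [Nat.sub_add_cancel hj]; omega)
    by_contra hc
    have := hmin ⟨hj1, hbj.trans (hm hj1 (by omega)), by omega⟩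
    omega
  omega

lemma eq_transpose_of_isGreatest_partIndices (hm : Nonincreasing f) (hB : ZeroAfter f M)
    {j : ℕ} (h : IsGreatest (partIndices f a b) j) : 1 ≤ b ∧ transpose f b = j := by
  obtain ⟨⟨hj, hbj, hja⟩, hmax⟩ := h
  have hb : 1 ≤ b := by
    by_contra hb
    have := hmax (show M + j + 1 ∈ partIndices f a b from
      ⟨by omega, by omega, by rw [hB _ (by omega)]; omega⟩)
    omega
  refine ⟨hb, transpose_eq_of hm hB hb (fun _ => hbj) ?_⟩
  by_contra hc
  have := hmax (show j + 1 ∈ partIndices f a b from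
    ⟨by omega, by omega, (hm hj (by omega)).trans hja⟩)
  omega

lemma Window.odd_of_isLeast (hw : Window D a b) (hD : MarksOddMult f D) (hm : Nonincreasing f)
    (hB : ZeroAfter f M) {j : ℕ} (h : IsLeast (partIndices f a b) j) : Odd j := by
  rw [eq_transpose_of_isLeast_partIndices hm hB h]
  exact (hw.even_transpose_succ hD hm hB).add_one

lemma Window.even_of_isGreatest (hw : Window D a b) (hD : MarksOddMult f D)
    (hm : Nonincreasing f) (hB : ZeroAfter f M) {j : ℕ} (h : IsGreatest (partIndices f a b) j) :
    Even j := by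
  obtain ⟨hb, rfl⟩ := eq_transpose_of_isGreatest_partIndices hm hB h
  exact hw.even_transpose hD hm hB hb

lemma exists_window_isGreatest_of_drop (hD : MarksOddMult f D) (hm : Nonincreasing f)
    (hB : ZeroAfter f M) {p : ℕ} (hp : Even p) (hp1 : 1 ≤ p) (hdrop : f (p + 1) < f p) :
    ∃ a, Window D a (f p) ∧ IsGreatest (partIndices f a (f p)) p := by
  have htp : transpose f (f p) = p := transpose_eq_of hm hB (by omega) (fun _ => le_rfl) hdrop
  have hgreatest : ∀ a, f p ≤ a → IsGreatest (partIndices f a (f p)) p := fun a ha =>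
    ⟨⟨hp1, le_rfl, ha⟩, fun j ⟨_, hj, _⟩ => by
      by_contra hc
      have := hm (by omega) (show p + 1 ≤ j by omega)
      omega⟩
  by_cases hcov : ∃ a' b', Paired D a' b' ∧ b' ≤ f p ∧ f p ≤ a'
  · obtain ⟨a', b', hpair, hb', ha'⟩ := hcov
    obtain rfl : b' = f p := by
      by_contra hne
      have := hpair.odd_transpose hD hm hB (lt_of_le_of_ne hb' hne) ha'
      rw [htp] at this
      exact Nat.not_even_iff_odd.mpr this hp
    exact ⟨a', Or.inl hpair, hgreatest a' ha'⟩
  · exact ⟨f p, Or.inr ⟨rfl, hcov⟩, hgreatest _ le_rfl⟩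

lemma exists_window_isLeast_of_drop (hD : MarksOddMult f D) (hm : Nonincreasing f)
    (hB : ZeroAfter f M) {p : ℕ} (hp : Even p) (hp1 : 1 ≤ p) (hdrop : f (p + 1) < f p) :
    ∃ b, Window D (f (p + 1)) b ∧ IsLeast (partIndices f (f (p + 1)) b) (p + 1) := by
  have htp : transpose f (f (p + 1) + 1) = p :=
    transpose_eq_of hm hB (by omega) (fun _ => by omega) (by omega)
  have hleast : ∀ b, b ≤ f (p + 1) → IsLeast (partIndices f (f (p + 1)) b) (p + 1) :=
    fun b hb => ⟨⟨by omega, hb, le_rfl⟩, fun j ⟨hj1, _, hj⟩ => by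
      by_contra hc
      have := hm hj1 (show j ≤ p by omega)
      omega⟩
  by_cases hcov : ∃ a' b', Paired D a' b' ∧ b' ≤ f (p + 1) ∧ f (p + 1) ≤ a'
  · obtain ⟨a', b', hpair, hb', ha'⟩ := hcov
    obtain rfl : a' = f (p + 1) := by
      by_contra hne
      have := hpair.odd_transpose hD hm hB (by omega) (lt_of_le_of_ne ha' (Ne.symm hne))
      rw [htp] at this
      exact Nat.not_even_iff_odd.mpr this hp
    exact ⟨b', Or.inl hpair, hleast b' hb'⟩
  · exact ⟨f (p + 1), Or.inr ⟨rfl, hcov⟩, hleast _ le_rfl⟩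

end Windows

section Intervals

variable {f : ℕ → ℕ} {M : ℕ} {Δ : Set ℕ} {a b : ℕ}

lemma jset_singleton (f : ℕ → ℕ) (v : ℕ) : Jset f {v} = partIndices f v v := by
  ext j
  simp only [Jset, partIndices, Set.mem_singleton_iff, Set.mem_ofPred_eq]
  omega

lemma jset_pairedS (hB : ZeroAfter f M) :
    Jset f {i | (i = 0 ∨ 1 ≤ mult f i) ∧ b ≤ i ∧ i ≤ a} = partIndices f a b := by
  ext j
  simp only [Jset, partIndices, Set.mem_ofPred_eq]
  refine ⟨fun ⟨hj, _, h⟩ => ⟨hj, h⟩, fun ⟨hj, h⟩ => ⟨hj, ?_, h⟩⟩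
  rcases Nat.eq_zero_or_pos (f j) with h0 | hpos
  · exact Or.inl h0
  · exact Or.inr (one_le_mult hB hj hpos)

lemma jset_pairedOE (hB : ZeroAfter f M) (hb : 1 ≤ b) :
    Jset f {i | 1 ≤ mult f i ∧ b ≤ i ∧ i ≤ a} = partIndices f a b := by
  ext j
  simp only [Jset, partIndices, Set.mem_ofPred_eq]
  exact ⟨fun ⟨hj, _, h⟩ => ⟨hj, h⟩, fun ⟨hj, h⟩ => ⟨hj, one_le_mult hB hj (by omega), h⟩⟩

lemma IsIntervalS.exists_window (hB : ZeroAfter f M) (h : IsIntervalS f Δ) :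
    ∃ a b, Window (Dsymp f) a b ∧ Jset f Δ = partIndices f a b := by
  rcases h with ⟨a, b, hp, rfl⟩ | ⟨v, -, -, hnc, rfl⟩
  · exact ⟨a, b, Or.inl hp, jset_pairedS hB⟩
  · exact ⟨v, v, Or.inr ⟨rfl, hnc⟩, jset_singleton f v⟩

lemma IsIntervalOE.exists_window (hB : ZeroAfter f M) (h : IsIntervalOE f Δ) :
    ∃ a b, Window (OddSet f) a b ∧ Jset f Δ = partIndices f a b := by
  rcases h with ⟨a, b, hp, rfl⟩ | ⟨v, -, -, hnc, rfl⟩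
  · exact ⟨a, b, Or.inl hp, jset_pairedOE hB (pos_of_mem_oddSet hB hp.2.2.1)⟩
  · exact ⟨v, v, Or.inr ⟨rfl, hnc⟩, jset_singleton f v⟩

lemma exists_isIntervalS (hB : ZeroAfter f M) (hw : Window (Dsymp f) a b)
    (hsingle : a = b → Even a ∧ ∃ j, 1 ≤ j ∧ f j = a) :
    ∃ Δ, IsIntervalS f Δ ∧ Jset f Δ = partIndices f a b := by
  rcases hw with hp | ⟨rfl, hnc⟩
  · exact ⟨_, Or.inl ⟨a, b, hp, rfl⟩, jset_pairedS hB⟩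
  · obtain ⟨ha, j, hj, rfl⟩ := hsingle rfl
    refine ⟨{f j}, Or.inr ⟨f j, ha, ?_, hnc, rfl⟩, jset_singleton f _⟩
    rcases Nat.eq_zero_or_pos (f j) with h0 | hpos
    · exact Or.inl h0
    · exact Or.inr ⟨by obtain ⟨k, hk⟩ := ha; omega, one_le_mult hB hj hpos⟩

lemma exists_isIntervalOE (hB : ZeroAfter f M) (hw : Window (OddSet f) a b)
    (hsingle : a = b → Odd a ∧ ∃ j, 1 ≤ j ∧ f j = a) :
    ∃ Δ, IsIntervalOE f Δ ∧ Jset f Δ = partIndices f a b := by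
  rcases hw with hp | ⟨rfl, hnc⟩
  · exact ⟨_, Or.inl ⟨a, b, hp, rfl⟩, jset_pairedOE hB (pos_of_mem_oddSet hB hp.2.2.1)⟩
  · obtain ⟨ha, j, hj, rfl⟩ := hsingle rfl
    exact ⟨{f j}, Or.inr ⟨f j, ha, one_le_mult hB hj ha.pos, hnc, rfl⟩, jset_singleton f _⟩

lemma IsIntervalS.odd_of_isLeast (h : IsIntervalS f Δ) (hm : Nonincreasing f)
    (hB : ZeroAfter f M) {j : ℕ} (hj : IsLeast (Jset f Δ) j) : Odd j := by
  obtain ⟨a, b, hw, hJ⟩ := h.exists_window hB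
  exact hw.odd_of_isLeast (marksOddMult_dsymp hm hB) hm hB (hJ ▸ hj)

lemma IsIntervalS.even_of_isGreatest (h : IsIntervalS f Δ) (hm : Nonincreasing f)
    (hB : ZeroAfter f M) {j : ℕ} (hj : IsGreatest (Jset f Δ) j) : Even j := by
  obtain ⟨a, b, hw, hJ⟩ := h.exists_window hB
  exact hw.even_of_isGreatest (marksOddMult_dsymp hm hB) hm hB (hJ ▸ hj)

lemma IsIntervalOE.odd_of_isLeast (h : IsIntervalOE f Δ) (hm : Nonincreasing f)
    (hB : ZeroAfter f M) (heven : Even (OddSet f).ncard) {j : ℕ} (hj : IsLeast (Jset f Δ) j) :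
    Odd j := by
  obtain ⟨a, b, hw, hJ⟩ := h.exists_window hB
  exact hw.odd_of_isLeast (marksOddMult_oddSet hm hB heven) hm hB (hJ ▸ hj)

lemma IsIntervalOE.even_of_isGreatest (h : IsIntervalOE f Δ) (hm : Nonincreasing f)
    (hB : ZeroAfter f M) (heven : Even (OddSet f).ncard) {j : ℕ}
    (hj : IsGreatest (Jset f Δ) j) : Even j := by
  obtain ⟨a, b, hw, hJ⟩ := h.exists_window hB
  exact hw.even_of_isGreatest (marksOddMult_oddSet hm hB heven) hm hB (hJ ▸ hj)

variable {p : ℕ}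

lemma exists_isIntervalS_isGreatest_of_drop (hm : Nonincreasing f) (hB : ZeroAfter f M)
    (hp : Even p) (hp1 : 1 ≤ p) (hfp : Even (f p)) (hdrop : f (p + 1) < f p) :
    ∃ Δ, IsIntervalS f Δ ∧ IsGreatest (Jset f Δ) p := by
  obtain ⟨a, hw, hg⟩ :=
    exists_window_isGreatest_of_drop (marksOddMult_dsymp hm hB) hm hB hp hp1 hdrop
  obtain ⟨Δ, hΔ, hJ⟩ := exists_isIntervalS hB hw fun ha => ⟨ha ▸ hfp, p, hp1, ha.symm⟩
  exact ⟨Δ, hΔ, hJ ▸ hg⟩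

lemma exists_isIntervalS_isLeast_of_drop (hm : Nonincreasing f) (hB : ZeroAfter f M)
    (hp : Even p) (hp1 : 1 ≤ p) (hfp : Even (f (p + 1))) (hdrop : f (p + 1) < f p) :
    ∃ Δ, IsIntervalS f Δ ∧ IsLeast (Jset f Δ) (p + 1) := by
  obtain ⟨b, hw, hl⟩ :=
    exists_window_isLeast_of_drop (marksOddMult_dsymp hm hB) hm hB hp hp1 hdrop
  obtain ⟨Δ, hΔ, hJ⟩ := exists_isIntervalS hB hw fun _ => ⟨hfp, p + 1, by omega, rfl⟩
  exact ⟨Δ, hΔ, hJ ▸ hl⟩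

lemma exists_isIntervalOE_isGreatest_of_drop (hm : Nonincreasing f) (hB : ZeroAfter f M)
    (heven : Even (OddSet f).ncard) (hp : Even p) (hp1 : 1 ≤ p) (hfp : Odd (f p))
    (hdrop : f (p + 1) < f p) : ∃ Δ, IsIntervalOE f Δ ∧ IsGreatest (Jset f Δ) p := by
  obtain ⟨a, hw, hg⟩ :=
    exists_window_isGreatest_of_drop (marksOddMult_oddSet hm hB heven) hm hB hp hp1 hdrop
  obtain ⟨Δ, hΔ, hJ⟩ := exists_isIntervalOE hB hw fun ha => ⟨ha ▸ hfp, p, hp1, ha.symm⟩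
  exact ⟨Δ, hΔ, hJ ▸ hg⟩

lemma exists_isIntervalOE_isLeast_of_drop (hm : Nonincreasing f) (hB : ZeroAfter f M)
    (heven : Even (OddSet f).ncard) (hp : Even p) (hp1 : 1 ≤ p) (hfp : Odd (f (p + 1)))
    (hdrop : f (p + 1) < f p) : ∃ Δ, IsIntervalOE f Δ ∧ IsLeast (Jset f Δ) (p + 1) := by
  obtain ⟨b, hw, hl⟩ :=
    exists_window_isLeast_of_drop (marksOddMult_oddSet hm hB heven) hm hB hp hp1 hdrop
  obtain ⟨Δ, hΔ, hJ⟩ := exists_isIntervalOE hB hw fun _ => ⟨hfp, p + 1, by omega, rfl⟩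
  exact ⟨Δ, hΔ, hJ ▸ hl⟩

end Intervals

section Blocks

/-- `𝒥` is a family of index sets, `K` marks the admissible indices and `L p` says that nothing
changes between the indices `p` and `p + 1`. -/
structure BlockSystem (K L : ℕ → Prop) (𝒥 : Set (Set ℕ)) : Prop where
  pos : ∀ Js ∈ 𝒥, ∀ j ∈ Js, 1 ≤ j
  odd_of_isLeast : ∀ Js ∈ 𝒥, ∀ j, IsLeast Js j → Odd j
  even_of_isGreatest : ∀ Js ∈ 𝒥, ∀ j, IsGreatest Js j → Even j
  mem_iff_of_level : ∀ p, 1 ≤ p → L p → ∀ Js ∈ 𝒥, (p ∈ Js ↔ p + 1 ∈ Js)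
  iff_of_level : ∀ p, L p → (K p ↔ K (p + 1))
  iff_of_odd : ∀ p, Odd p → (K p ↔ K (p + 1))
  isGreatest_of_drop : ∀ p, 1 ≤ p → Even p → K p → ¬ L p → ∃ Js ∈ 𝒥, IsGreatest Js p
  isLeast_of_drop : ∀ p, 1 ≤ p → Even p → K (p + 1) → ¬ L p → ∃ Js ∈ 𝒥, IsLeast Js (p + 1)

def blockStarts (K : ℕ → Prop) (𝒥 : Set (Set ℕ)) : Set ℕ :=
  {j | 1 ≤ j ∧ K j ∧ ∃ Js ∈ 𝒥, IsLeast Js j}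

def blockEnds (K : ℕ → Prop) (𝒥 : Set (Set ℕ)) : Set ℕ :=
  {j | 1 ≤ j ∧ K j ∧ ∃ Js ∈ 𝒥, IsGreatest Js j}

noncomputable def blockMarks (K : ℕ → Prop) (𝒥 : Set (Set ℕ)) : ℕ → ℤ := fun j =>
  if j ∈ blockStarts K 𝒥 then 1 else if j ∈ blockEnds K 𝒥 then -1 else 0

def InsideBlock (K L : ℕ → Prop) (𝒥 : Set (Set ℕ)) (p : ℕ) : Prop :=
  K p ∧ K (p + 1) ∧ (Even p → L p) ∧
    ∃ Js ∈ 𝒥, (∃ j, IsLeast Js j ∧ j ≤ p) ∧ ∀ j, IsGreatest Js j → p < j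

namespace BlockSystem

variable {K L : ℕ → Prop} {𝒥 : Set (Set ℕ)}

lemma not_level_of_mem_blockStarts (h : BlockSystem K L 𝒥) {p : ℕ} (hp : 1 ≤ p)
    (hq : p + 1 ∈ blockStarts K 𝒥) : ¬ L p := fun hL => by
  obtain ⟨-, -, Js, hJs, hleast⟩ := hq
  have := hleast.2 ((h.mem_iff_of_level p hp hL Js hJs).mpr hleast.1)
  omega

lemma not_level_of_mem_blockEnds (h : BlockSystem K L 𝒥) {p : ℕ} (hq : p ∈ blockEnds K 𝒥) :
    ¬ L p := fun hL => by
  obtain ⟨hp, -, Js, hJs, hgreatest⟩ := hq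
  have := hgreatest.2 ((h.mem_iff_of_level p hp hL Js hJs).mp hgreatest.1)
  omega

lemma not_insideBlock_zero (h : BlockSystem K L 𝒥) : ¬ InsideBlock K L 𝒥 0 := by
  rintro ⟨-, -, -, Js, hJs, ⟨j, hj, hj0⟩, -⟩
  have := h.pos Js hJs j hj.1
  omega

lemma insideBlock_of_mem_blockStarts (h : BlockSystem K L 𝒥) {q : ℕ}
    (hq : q ∈ blockStarts K 𝒥) : InsideBlock K L 𝒥 q := by
  obtain ⟨-, hKq, Js, hJs, hleast⟩ := hq
  have hodd := h.odd_of_isLeast Js hJs q hleast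
  refine ⟨hKq, (h.iff_of_odd q hodd).mp hKq, fun he => absurd he (Nat.not_even_iff_odd.mpr hodd),
    Js, hJs, ⟨q, hleast, le_rfl⟩, fun j hj => lt_of_le_of_ne (hleast.2 hj.1) fun hqj => ?_⟩
  subst hqj
  exact Nat.not_even_iff_odd.mpr hodd (h.even_of_isGreatest Js hJs q hj)

lemma not_insideBlock_of_mem_blockStarts (h : BlockSystem K L 𝒥) {p : ℕ}
    (hq : p + 1 ∈ blockStarts K 𝒥) : ¬ InsideBlock K L 𝒥 p := by
  intro hin
  rcases Nat.eq_zero_or_pos p with rfl | hp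
  · exact h.not_insideBlock_zero hin
  obtain ⟨-, -, Js, hJs, hleast⟩ := hq
  have hp : Even p := by
    obtain ⟨k, hk⟩ := h.odd_of_isLeast Js hJs _ hleast
    exact ⟨k, by omega⟩
  exact h.not_level_of_mem_blockStarts (by omega) ⟨by omega, hin.2.1, Js, hJs, hleast⟩
    (hin.2.2.1 hp)

lemma insideBlock_of_mem_blockEnds (h : BlockSystem K L 𝒥) {p : ℕ}
    (hq : p + 1 ∈ blockEnds K 𝒥) : InsideBlock K L 𝒥 p := by
  obtain ⟨-, hKq, Js, hJs, hgreatest⟩ := hq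
  have heven := h.even_of_isGreatest Js hJs _ hgreatest
  have hodd : Odd p := by
    obtain ⟨k, hk⟩ := heven
    exact ⟨k - 1, by omega⟩
  obtain ⟨j, hleast⟩ : ∃ j, IsLeast Js j := ⟨sInf Js, Nat.sInf_mem ⟨_, hgreatest.1⟩,
    fun _ hx => Nat.sInf_le hx⟩
  have hj : j ≤ p + 1 := hleast.2 hgreatest.1
  have hjodd := h.odd_of_isLeast Js hJs j hleast
  refine ⟨(h.iff_of_odd p hodd).mpr hKq, hKq, fun he => absurd he (Nat.not_even_iff_odd.mpr hodd),
    Js, hJs, ⟨j, hleast, ?_⟩, fun j' hj' => ?_⟩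
  · rcases hj.lt_or_eq with hj | rfl
    · omega
    · exact absurd heven (Nat.not_even_iff_odd.mpr hjodd)
  · have := hj'.2 hgreatest.1
    omega

lemma not_insideBlock_of_mem_blockEnds (h : BlockSystem K L 𝒥) {q : ℕ}
    (hq : q ∈ blockEnds K 𝒥) : ¬ InsideBlock K L 𝒥 q := fun hin =>
  h.not_level_of_mem_blockEnds hq (hin.2.2.1 (by
    obtain ⟨-, -, Js, hJs, hgreatest⟩ := hq
    exact h.even_of_isGreatest Js hJs q hgreatest))

lemma insideBlock_succ_iff (h : BlockSystem K L 𝒥) {p : ℕ} (hs : p + 1 ∉ blockStarts K 𝒥)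
    (he : p + 1 ∉ blockEnds K 𝒥) : InsideBlock K L 𝒥 (p + 1) ↔ InsideBlock K L 𝒥 p := by
  constructor
  · rintro ⟨hKq, -, -, Js, hJs, ⟨j, hleast, hjq⟩, hgreatest⟩
    have hjp : j ≤ p := by
      refine Nat.le_of_lt_succ (lt_of_le_of_ne hjq fun hjq => hs ?_)
      subst hjq
      exact ⟨h.pos Js hJs _ hleast.1, hKq, Js, hJs, hleast⟩
    have hp : 1 ≤ p := (h.pos Js hJs j hleast.1).trans hjp
    have hKp : K p ∧ (Even p → L p) := by
      rcases Nat.even_or_odd p with hpe | hpo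
      · have hL : L p := by_contra fun hL => by
          obtain ⟨Js', hJs', hleast'⟩ := h.isLeast_of_drop p hp hpe hKq hL
          exact hs ⟨by omega, hKq, Js', hJs', hleast'⟩
        exact ⟨(h.iff_of_level p hL).mpr hKq, fun _ => hL⟩
      · exact ⟨(h.iff_of_odd p hpo).mpr hKq, fun hpe => absurd hpe (Nat.not_even_iff_odd.mpr hpo)⟩
    exact ⟨hKp.1, hKq, hKp.2, Js, hJs, ⟨j, hleast, hjp⟩, fun j hj => by
      have := hgreatest j hj
      omega⟩
  · rintro ⟨-, hKq, -, Js, hJs, ⟨j, hleast, hjp⟩, hgreatest⟩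
    have hKq' : K (p + 1 + 1) ∧ (Even (p + 1) → L (p + 1)) := by
      rcases Nat.even_or_odd (p + 1) with hqe | hqo
      · have hL : L (p + 1) := by_contra fun hL => by
          obtain ⟨Js', hJs', hgreatest'⟩ := h.isGreatest_of_drop _ (by omega) hqe hKq hL
          exact he ⟨by omega, hKq, Js', hJs', hgreatest'⟩
        exact ⟨(h.iff_of_level _ hL).mp hKq, fun _ => hL⟩
      · exact ⟨(h.iff_of_odd _ hqo).mp hKq, fun hqe => absurd hqe (Nat.not_even_iff_odd.mpr hqo)⟩
    refine ⟨hKq, hKq'.1, hKq'.2, Js, hJs, ⟨j, hleast, by omega⟩, fun j' hj' => ?_⟩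
    refine lt_of_le_of_ne (hgreatest j' hj') fun hj'q => he ?_
    subst hj'q
    exact ⟨by omega, hKq, Js, hJs, hj'⟩

/-- The marks `+1` at block starts and `-1` at block ends alternate, so their partial sums
are the indicator of being inside a block. -/
theorem Sz_blockMarks (h : BlockSystem K L 𝒥) (p : ℕ) :
    Sz (blockMarks K 𝒥) p = if InsideBlock K L 𝒥 p then 1 else 0 := by
  induction p with
  | zero => simp [Sz, h.not_insideBlock_zero]
  | succ p ih =>
    rw [Sz, Finset.sum_Icc_succ_top (by omega), ← Sz, ih, blockMarks]
    by_cases hs : p + 1 ∈ blockStarts K 𝒥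
    · simp [hs, h.not_insideBlock_of_mem_blockStarts hs, h.insideBlock_of_mem_blockStarts hs]
    by_cases he : p + 1 ∈ blockEnds K 𝒥
    · simp [hs, he, h.insideBlock_of_mem_blockEnds he, h.not_insideBlock_of_mem_blockEnds he]
    · simp [hs, he, h.insideBlock_succ_iff hs he]

end BlockSystem

end Blocks

section InducedBlocks

variable {f1 f2 : ℕ → ℕ}

def EvenOdd (f1 f2 : ℕ → ℕ) (j : ℕ) : Prop := Even (f1 j) ∧ Odd (f2 j)

def SameParts (f1 f2 : ℕ → ℕ) (p : ℕ) : Prop := f1 p = f1 (p + 1) ∧ f2 p = f2 (p + 1)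

def intervalJsets (f1 f2 : ℕ → ℕ) : Set (Set ℕ) :=
  {Js | (∃ Δ, IsIntervalS f1 Δ ∧ Js = Jset f1 Δ) ∨ (∃ Δ, IsIntervalOE f2 Δ ∧ Js = Jset f2 Δ)}

lemma exists_mem_intervalJsets_iff {P : Set ℕ → Prop} :
    (∃ Js ∈ intervalJsets f1 f2, P Js) ↔
      (∃ Δ, IsIntervalS f1 Δ ∧ P (Jset f1 Δ)) ∨ (∃ Δ, IsIntervalOE f2 Δ ∧ P (Jset f2 Δ)) := by
  constructor
  · rintro ⟨Js, ⟨Δ, hΔ, rfl⟩ | ⟨Δ, hΔ, rfl⟩, hP⟩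
    exacts [Or.inl ⟨Δ, hΔ, hP⟩, Or.inr ⟨Δ, hΔ, hP⟩]
  · rintro (⟨Δ, hΔ, hP⟩ | ⟨Δ, hΔ, hP⟩)
    exacts [⟨_, Or.inl ⟨Δ, hΔ, rfl⟩, hP⟩, ⟨_, Or.inr ⟨Δ, hΔ, rfl⟩, hP⟩]

lemma xi_eq_blockMarks : xi f1 f2 = blockMarks (EvenOdd f1 f2) (intervalJsets f1 f2) := by
  have hplus : JplusSet f1 f2 = blockStarts (EvenOdd f1 f2) (intervalJsets f1 f2) := by
    ext j
    simp only [JplusSet, blockStarts, EvenOdd, exists_mem_intervalJsets_iff, Set.mem_ofPred_eq,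
      and_assoc]
  have hminus : JminusSet f1 f2 = blockEnds (EvenOdd f1 f2) (intervalJsets f1 f2) := by
    ext j
    simp only [JminusSet, blockEnds, EvenOdd, exists_mem_intervalJsets_iff, Set.mem_ofPred_eq,
      and_assoc]
  funext j
  simp only [xi, blockMarks, hplus, hminus]

lemma drop_of_not_sameParts (h1m : Nonincreasing f1) (h2m : Nonincreasing f2) {p : ℕ}
    (hp : 1 ≤ p) (h : ¬ SameParts f1 f2 p) : f1 (p + 1) < f1 p ∨ f2 (p + 1) < f2 p := by
  have := h1m hp (show p ≤ p + 1 by omega)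
  have := h2m hp (show p ≤ p + 1 by omega)
  unfold SameParts at h
  omega

lemma blockSystem_intervalJsets {M : ℕ} (h1m : Nonincreasing f1) (h1B : ZeroAfter f1 M)
    (h1sp : SpecialPairs f1) (h2m : Nonincreasing f2) (h2B : ZeroAfter f2 M)
    (h2sp : SpecialPairs f2) (heven2 : Even (OddSet f2).ncard) :
    BlockSystem (EvenOdd f1 f2) (SameParts f1 f2) (intervalJsets f1 f2) where
  pos := by
    rintro Js (⟨Δ, -, rfl⟩ | ⟨Δ, -, rfl⟩) j hj <;> exact hj.1
  odd_of_isLeast := by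
    rintro Js (⟨Δ, hΔ, rfl⟩ | ⟨Δ, hΔ, rfl⟩) j hj
    exacts [hΔ.odd_of_isLeast h1m h1B hj, hΔ.odd_of_isLeast h2m h2B heven2 hj]
  even_of_isGreatest := by
    rintro Js (⟨Δ, hΔ, rfl⟩ | ⟨Δ, hΔ, rfl⟩) j hj
    exacts [hΔ.even_of_isGreatest h1m h1B hj, hΔ.even_of_isGreatest h2m h2B heven2 hj]
  mem_iff_of_level := by
    rintro p hp ⟨h1, h2⟩ Js (⟨Δ, -, rfl⟩ | ⟨Δ, -, rfl⟩)
    · show (1 ≤ p ∧ f1 p ∈ Δ) ↔ (1 ≤ p + 1 ∧ f1 (p + 1) ∈ Δ)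
      rw [h1]
      exact ⟨fun h => ⟨by omega, h.2⟩, fun h => ⟨hp, h.2⟩⟩
    · show (1 ≤ p ∧ f2 p ∈ Δ) ↔ (1 ≤ p + 1 ∧ f2 (p + 1) ∈ Δ)
      rw [h2]
      exact ⟨fun h => ⟨by omega, h.2⟩, fun h => ⟨hp, h.2⟩⟩
  iff_of_level := by
    rintro p ⟨h1, h2⟩
    simp only [EvenOdd, h1, h2]
  iff_of_odd p hp := by
    have h1 := h1sp.mod_two_eq hp
    have h2 := h2sp.mod_two_eq hp
    simp only [EvenOdd, Nat.even_iff, Nat.odd_iff]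
    omega
  isGreatest_of_drop p hp1 hp hK hL := by
    rcases drop_of_not_sameParts h1m h2m hp1 hL with hdrop | hdrop
    · obtain ⟨Δ, hΔ, hg⟩ := exists_isIntervalS_isGreatest_of_drop h1m h1B hp hp1 hK.1 hdrop
      exact ⟨_, Or.inl ⟨Δ, hΔ, rfl⟩, hg⟩
    · obtain ⟨Δ, hΔ, hg⟩ :=
        exists_isIntervalOE_isGreatest_of_drop h2m h2B heven2 hp hp1 hK.2 hdrop
      exact ⟨_, Or.inr ⟨Δ, hΔ, rfl⟩, hg⟩
  isLeast_of_drop p hp1 hp hK hL := by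
    rcases drop_of_not_sameParts h1m h2m hp1 hL with hdrop | hdrop
    · obtain ⟨Δ, hΔ, hl⟩ := exists_isIntervalS_isLeast_of_drop h1m h1B hp hp1 hK.1 hdrop
      exact ⟨_, Or.inl ⟨Δ, hΔ, rfl⟩, hl⟩
    · obtain ⟨Δ, hΔ, hl⟩ := exists_isIntervalOE_isLeast_of_drop h2m h2B heven2 hp hp1 hK.2 hdrop
      exact ⟨_, Or.inr ⟨Δ, hΔ, rfl⟩, hl⟩

end InducedBlocks

/-- At odd `p` this is parity. At even `p` it holds at `p ± 1`, and the concavity of `S T`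
together with `F p = F (p + 1)` carries it over to `p`. -/
lemma S_add_one_le_of_odd {F T : ℕ → ℕ} (hT : Nonincreasing T)
    (hodd : ∀ k, Odd k → Odd (S T k)) (hle : ∀ k, S F k ≤ S T k) (hsp : SpecialPairs F)
    {p : ℕ} (hp : 1 ≤ p) (hFp : Even (F p)) (heven : Even p → F p = F (p + 1)) :
    S F p + 1 ≤ S T p := by
  rcases Nat.even_or_odd p with ⟨q, hq⟩ | ⟨q, rfl⟩
  · obtain ⟨r, rfl⟩ : ∃ r, p = r + 1 := ⟨p - 1, by omega⟩
    have hF1 := Nat.even_iff.mp (hq ▸ two_mul q ▸ hsp.even_S q)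
    have hT0 := Nat.odd_iff.mp (hodd r ⟨q - 1, by omega⟩)
    have hT2 := Nat.odd_iff.mp (hodd (r + 1 + 1) ⟨q, by omega⟩)
    have hF0 := hle r
    have hF2 := hle (r + 1 + 1)
    have hconc := hT (show 1 ≤ r + 1 by omega) (show r + 1 ≤ r + 1 + 1 by omega)
    have hFeq := heven ⟨q, hq⟩
    have hFp := Nat.even_iff.mp hFp
    rw [S_succ F (r + 1)] at hF2
    rw [S_succ T (r + 1)] at hF2 hT2
    rw [S_succ F r] at hF1 hF2 ⊢
    rw [S_succ T r] at hF2 hT2 ⊢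
    omega
  · have hF := Nat.even_iff.mp (hsp.even_S q)
    have hT := Nat.odd_iff.mp (hodd (2 * q + 1) ⟨q, rfl⟩)
    have hle := hle (2 * q + 1)
    have hFp := Nat.even_iff.mp hFp
    rw [S_succ F] at hle ⊢
    omega

section Induced

variable {f1 f2 g : ℕ → ℕ} {N1 n2 : ℕ}

lemma blockSystem_of_isPartition (h1 : IsPartition f1 N1) (h1sp : SpecialPairs f1)
    (h2 : IsPartition f2 (2 * n2)) (h2o : Orth f2) (h2sp : SpecialPairs f2) :
    BlockSystem (EvenOdd f1 f2) (SameParts f1 f2) (intervalJsets f1 f2) := by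
  obtain ⟨M1, hB1, -⟩ := h1.zeroAfter_total
  obtain ⟨M2, hB2, hN2⟩ := h2.zeroAfter_total
  have heven2 := even_ncard_oddSet_of_orth h2.mono hB2 h2o (hN2 ▸ even_two_mul n2)
  exact blockSystem_intervalJsets h1.mono (hB1.mono (Nat.le_add_right M1 M2)) h1sp h2.mono
    (hB2.mono (Nat.le_add_left M2 M1)) h2sp heven2

lemma S_ind (hg : ∀ j, 1 ≤ j → (g j : ℤ) = (f1 j : ℤ) + (f2 j : ℤ) + xi f1 f2 j) (p : ℕ) :
    (S g p : ℤ) = S f1 p + S f2 p + Sz (xi f1 f2) p := by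
  simp only [S, Sz, Nat.cast_sum, ← Finset.sum_add_distrib]
  exact Finset.sum_congr rfl fun j hj => hg j (Finset.mem_Icc.mp hj).1

lemma add_two_le_of_evenOdd (h1m : Nonincreasing f1) (h2m : Nonincreasing f2) {j : ℕ}
    (hj : 1 ≤ j) (hK : EvenOdd f1 f2 j) (hK' : EvenOdd f1 f2 (j + 1))
    (hL : ¬ SameParts f1 f2 j) : f1 (j + 1) + f2 (j + 1) + 2 ≤ f1 j + f2 j := by
  obtain ⟨⟨a, ha⟩, ⟨b, hb⟩⟩ := hK
  obtain ⟨⟨c, hc⟩, ⟨d, hd⟩⟩ := hK'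
  have := h1m hj (show j ≤ j + 1 by omega)
  have := h2m hj (show j ≤ j + 1 by omega)
  unfold SameParts at hL
  omega

lemma ind_succ_le (h : BlockSystem (EvenOdd f1 f2) (SameParts f1 f2) (intervalJsets f1 f2))
    (h1m : Nonincreasing f1) (h2m : Nonincreasing f2)
    (hg : ∀ j, 1 ≤ j → (g j : ℤ) = (f1 j : ℤ) + (f2 j : ℤ) + xi f1 f2 j) {j : ℕ} (hj : 1 ≤ j) :
    g (j + 1) ≤ g j := by
  have hg0 := hg j hj
  have hg1 := hg (j + 1) (by omega)
  rw [xi_eq_blockMarks] at hg0 hg1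
  unfold blockMarks at hg0 hg1
  set starts := blockStarts (EvenOdd f1 f2) (intervalJsets f1 f2)
  set ends := blockEnds (EvenOdd f1 f2) (intervalJsets f1 f2)
  have := h1m hj (show j ≤ j + 1 by omega)
  have := h2m hj (show j ≤ j + 1 by omega)
  have hstart : j + 1 ∈ starts → f1 (j + 1) + f2 (j + 1) + 1 ≤ f1 j + f2 j := fun hs => by
    have := drop_of_not_sameParts h1m h2m hj (h.not_level_of_mem_blockStarts hj hs)
    omega
  by_cases hs0 : j ∈ starts
  · rw [if_pos hs0] at hg0
    split_ifs at hg1 <;> omega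
  by_cases he0 : j ∈ ends
  · rw [if_neg hs0, if_pos he0] at hg0
    have hL := h.not_level_of_mem_blockEnds he0
    by_cases hs1 : j + 1 ∈ starts
    · have := add_two_le_of_evenOdd h1m h2m hj he0.2.1 hs1.2.1 hL
      rw [if_pos hs1] at hg1
      omega
    · have := drop_of_not_sameParts h1m h2m hj hL
      rw [if_neg hs1] at hg1
      split_ifs at hg1 <;> omega
  · rw [if_neg hs0, if_neg he0] at hg0
    by_cases hs1 : j + 1 ∈ starts
    · have := hstart hs1
      rw [if_pos hs1] at hg1
      omega
    · rw [if_neg hs1] at hg1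
      split_ifs at hg1 <;> omega

lemma isPartition_ind (h1 : IsPartition f1 N1) (h1sp : SpecialPairs f1)
    (h2 : IsPartition f2 (2 * n2)) (h2o : Orth f2) (h2sp : SpecialPairs f2)
    (hg : ∀ j, 1 ≤ j → (g j : ℤ) = (f1 j : ℤ) + (f2 j : ℤ) + xi f1 f2 j) :
    IsPartition g (N1 + 2 * n2) := by
  have h := blockSystem_of_isPartition h1 h1sp h2 h2o h2sp
  obtain ⟨M1, hB1, hN1⟩ := h1.zeroAfter_total
  obtain ⟨M2, hB2, hN2⟩ := h2.zeroAfter_total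
  have hB1' := hB1.mono (Nat.le_add_right M1 M2)
  have hB2' := hB2.mono (Nat.le_add_left M2 M1)
  have hnotK : ∀ j, M1 + M2 < j → ¬ EvenOdd f1 f2 j := fun j hj hK =>
    Nat.not_odd_zero (hB2' j hj ▸ hK.2)
  have hB : ZeroAfter g (M1 + M2) := fun j hj => by
    have := hg j (by omega)
    rw [xi_eq_blockMarks, blockMarks, if_neg fun hs => hnotK j hj hs.2.1,
      if_neg fun he => hnotK j hj he.2.1, hB1' j hj, hB2' j hj] at this
    exact_mod_cast this
  have hm : Nonincreasing g := fun j k hj hjk => by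
    induction k, hjk using Nat.le_induction with
    | base => exact le_rfl
    | succ k hk ih => exact (ind_succ_le h h1.mono h2.mono hg (hj.trans hk)).trans ih
  refine IsPartition.of_zeroAfter hm hB ?_
  have hS := S_ind hg (M1 + M2)
  rw [xi_eq_blockMarks, h.Sz_blockMarks, if_neg fun hin => hnotK _ (by omega) hin.2.1,
    S_eq_of_zeroAfter hB1 (Nat.le_add_right M1 M2), S_eq_of_zeroAfter hB2 (Nat.le_add_left M2 M1),
    hN1, hN2] at hS
  push_cast at hS
  omega

lemma S_ind_le {n1 : ℕ} {d1 d2 : ℕ → ℕ} (h1 : IsPartition f1 (2 * n1))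
    (h1sp : SpecialPairs f1) (h2 : IsPartition f2 (2 * n2)) (h2o : Orth f2)
    (h2sp : SpecialPairs f2)
    (hg : ∀ j, 1 ≤ j → (g j : ℤ) = (f1 j : ℤ) + (f2 j : ℤ) + xi f1 f2 j)
    (hd1 : IsPartition d1 (2 * n1 + 1)) (hd1o : Orth d1)
    (hd1dom : Dom d1 (transpose (unionP f1 one1)))
    (hd2 : IsPartition d2 (2 * n2)) (hd2dom : Dom d2 (transpose f2)) (p : ℕ) :
    S g p ≤ S (transpose d1) p + S (transpose d2) p := by
  have h := blockSystem_of_isPartition h1 h1sp h2 h2o h2sp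
  have hle1 : ∀ k, S f1 k ≤ S (transpose d1) k := fun k =>
    (S_le_S_unionP h1 isPartition_one1 k).trans
      (dom_transpose_of_dom_transpose hd1 (isPartition_unionP h1 isPartition_one1) hd1dom k)
  have hle2 := dom_transpose_of_dom_transpose hd2 h2 hd2dom p
  have hS := S_ind hg p
  rw [xi_eq_blockMarks, h.Sz_blockMarks] at hS
  split_ifs at hS with hin
  · obtain ⟨M, hB, hN⟩ := hd1.zeroAfter_total
    have hodd : ∀ k, Odd k → Odd (S (transpose d1) k) := fun k hk => by
      rw [Nat.odd_iff, S_transpose_mod_two_of_orth hd1.mono hB hd1o hk, hN]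
      omega
    have hp : 1 ≤ p := Nat.one_le_iff_ne_zero.mpr fun hp => h.not_insideBlock_zero (hp ▸ hin)
    have := S_add_one_le_of_odd (transpose_nonincreasing hB) hodd hle1 h1sp hp hin.1.1
      fun he => (hin.2.2.1 he).1
    omega
  · have := hle1 p
    omega

end Induced

theorem stmt3_general (n1 n2 : ℕ)
    (f1 : ℕ → ℕ) (h1 : IsPartition f1 (2*n1)) (h1sp : SpecialPairs f1)
    (f2 : ℕ → ℕ) (h2 : IsPartition f2 (2*n2)) (h2o : Orth f2) (h2sp : SpecialPairs f2)
    (g : ℕ → ℕ)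
    (hg : ∀ j, 1 ≤ j → (g j : ℤ) = (f1 j : ℤ) + (f2 j : ℤ) + xi f1 f2 j)
    (d1 d2 dg : ℕ → ℕ)
    (hd1 : IsSympDual d1 n1 f1) (hd2 : IsOrthDual d2 n2 f2)
    (hdg : IsSympDual dg (n1+n2) g) :
    Dom (unionP d1 d2) dg := by
  obtain ⟨⟨hd1P, hd1o, hd1dom⟩, -⟩ := hd1
  obtain ⟨⟨hd2P, hd2o, hd2dom⟩, -⟩ := hd2
  have hgP : IsPartition g (2 * (n1 + n2)) :=
    mul_add 2 n1 n2 ▸ isPartition_ind h1 h1sp h2 h2o h2sp hg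
  have hνP : IsPartition (unionP d1 d2) (2 * (n1 + n2) + 1) := by
    convert isPartition_unionP hd1P hd2P using 1
    ring
  exact hdg.2 _ hνP (hd1o.unionP hd2o hd1P hd2P)
    (dom_unionP_transpose_unionP_one1 hgP hd1P hd2P (by ring)
      (S_ind_le h1 h1sp h2 h2o h2sp hg hd1P hd1o hd1dom hd2P hd2dom))

/-- Proposition 1.9: `d(λ1) ∪ d(λ2) ≤ d(ind(λ1, λ2))`. -/
theorem stmt3 (n1 n2 : ℕ)
    (f1 : ℕ → ℕ) (h1 : IsPartition f1 (2*n1)) (h1s : Symp f1) (h1sp : SpecialPairs f1)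
    (f2 : ℕ → ℕ) (h2 : IsPartition f2 (2*n2)) (h2o : Orth f2) (h2sp : SpecialPairs f2)
    (g : ℕ → ℕ)
    (hg : ∀ j, 1 ≤ j → (g j : ℤ) = (f1 j : ℤ) + (f2 j : ℤ) + xi f1 f2 j)
    (d1 d2 dg : ℕ → ℕ)
    (hd1 : IsSympDual d1 n1 f1) (hd2 : IsOrthDual d2 n2 f2)
    (hdg : IsSympDual dg (n1+n2) g) :
    Dom (unionP d1 d2) dg :=
  stmt3_general n1 n2 f1 h1 h1sp f2 h2 h2o h2sp g hg d1 d2 dg hd1 hd2 hdg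

end Wald
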